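/- arXiv:2108.02193 — 3 statements merged into one kernel-verified Lean document; each statement's English description precedes it below -/
import Mathlib

section
/- Consider the two-sided 2-periodic membrane Markov chain of Example 2.2 with transition matrix ℙ on states {(−0,0),(−0,1),(+0,0),(+0,1)} given by rows ((1−p)(1−α), (1−p)α, pα, p(1−α)), (pα, p(1−α), (1−p)(1−α), (1−p)α), (0, 0, α, 1−α), (1−α, α, 0, 0), where α = 2−√2 and p ∈ [0,1]. Then the unique stationary distribution π satisfies π_{(+0,0)} + π_{(+0,1)} − π_{(−0,0)} − π_{(−0,1)} = (2α−1)(α(2p−1) + (p−1)²) / ((1−α)(2α+1) + (2α−1)p²). -/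
/-!
Summing the first two (or the last two) balance equations of `πℙ = π` shows that the mass
flowing into `(+0,1)` is `p π₋₀ + (1-p) π₋₁`; together with the balance equations at `(−0,0)`
and `(+0,0)` this expresses the whole stationary vector through `π₋₁`. Substituting, the
permeability times `(1-α)(2α+1) + (2α-1)p²` equals `(2α-1)(α(2p-1) + (p-1)²)` times the total
mass, for every `α` and `p`. The choice `α = 2 - √2` only enters to make the denominator positive.
-/

open Matrix

def membraneMatrix (p α : ℝ) : Matrix (Fin 4) (Fin 4) ℝ :=
  !![(1 - p) * (1 - α), (1 - p) * α, p * α, p * (1 - α);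
     p * α, p * (1 - α), (1 - p) * (1 - α), (1 - p) * α;
     0, 0, α, 1 - α;
     1 - α, α, 0, 0]

section Stationary

variable {p α : ℝ} {π : Fin 4 → ℝ}

theorem membraneMatrix_balance (h : ∀ j, ∑ i, π i * membraneMatrix p α i j = π j) :
    α * π 0 = (p * α + (1 - p) * (1 - α)) * π 1 ∧
      (1 - α) * π 2 = p * α * π 0 + (1 - p) * (1 - α) * π 1 ∧
      π 3 = p * π 0 + (1 - p) * π 1 := by
  have h₀ := h 0
  have h₁ := h 1
  have h₂ := h 2
  simp only [membraneMatrix, of_apply, cons_val', cons_val_zero, cons_val_fin_one,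
    Fin.sum_univ_four, cons_val_one, cons_val, mul_zero, add_zero] at h₀ h₁ h₂
  refine ⟨?_, ?_, ?_⟩
  · linear_combination -α * h₀ + (1 - α) * h₁
  · linear_combination -h₂
  · linear_combination h₀ + h₁

theorem permeability_mul_eq (h : ∀ j, ∑ i, π i * membraneMatrix p α i j = π j) :
    (π 2 + π 3 - π 0 - π 1) * ((1 - α) * (2 * α + 1) + (2 * α - 1) * p ^ 2) =
      (2 * α - 1) * (α * (2 * p - 1) + (p - 1) ^ 2) * ∑ i, π i := by
  obtain ⟨hπ₀, hπ₂, hπ₃⟩ := membraneMatrix_balance h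
  rw [Fin.sum_univ_four]
  linear_combination (-4 * (1 - α) + 2 * p * (3 - 2 * α)) * hπ₀ +
    2 * (1 - p + 2 * p * α) * hπ₂ + 2 * (1 - α) * (1 - p * (1 - 2 * α)) * hπ₃

end Stationary

theorem permeability_denominator_pos {α : ℝ} (h₁ : 1 / 2 ≤ α) (h₂ : α < 1) (p : ℝ) :
    0 < (1 - α) * (2 * α + 1) + (2 * α - 1) * p ^ 2 := by
  have : 0 ≤ (2 * α - 1) * p ^ 2 := mul_nonneg (by linarith) (sq_nonneg p)
  nlinarith

theorem stmt13_general (p : ℝ)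
    (α : ℝ) (hα : α = 2 - Real.sqrt 2)
    (P : Matrix (Fin 4) (Fin 4) ℝ)
    (hP : P = !![(1 - p) * (1 - α), (1 - p) * α, p * α, p * (1 - α);
                 p * α, p * (1 - α), (1 - p) * (1 - α), (1 - p) * α;
                 0, 0, α, 1 - α;
                 1 - α, α, 0, 0])
    (π : Fin 4 → ℝ) (hπsum : ∑ i, π i = 1)
    (hπstat : ∀ j, ∑ i, π i * P i j = π j) :
    π 2 + π 3 - π 0 - π 1 =
      (2 * α - 1) * (α * (2 * p - 1) + (p - 1) ^ 2) /
        ((1 - α) * (2 * α + 1) + (2 * α - 1) * p ^ 2) := by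
  subst hP
  have hsqrt₁ : 1 < Real.sqrt 2 := Real.one_lt_sqrt_two
  have hsqrt₂ : Real.sqrt 2 ≤ 3 / 2 := by
    rw [Real.sqrt_le_left (by norm_num)]
    norm_num
  have hD := permeability_denominator_pos (α := α) (by linarith) (by linarith) p
  rw [eq_div_iff hD.ne']
  simpa only [hπsum, mul_one] using permeability_mul_eq hπstat

/-- for the two-sided 2-periodic membrane chain of Example 2.2 (states
ordered (−0,0),(−0,1),(+0,0),(+0,1), α = 2−√2, p ∈ [0,1]), the stationary distribution π
satisfies the effective-permeability identity
π₊₀+π₊₁−π₋₀−π₋₁ = (2α−1)(α(2p−1)+(p−1)²) / ((1−α)(2α+1)+(2α−1)p²). -/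
theorem stmt13 (p : ℝ) (hp : p ∈ Set.Icc (0 : ℝ) 1)
    (α : ℝ) (hα : α = 2 - Real.sqrt 2)
    (P : Matrix (Fin 4) (Fin 4) ℝ)
    (hP : P = !![(1 - p) * (1 - α), (1 - p) * α, p * α, p * (1 - α);
                 p * α, p * (1 - α), (1 - p) * (1 - α), (1 - p) * α;
                 0, 0, α, 1 - α;
                 1 - α, α, 0, 0])
    (π : Fin 4 → ℝ) (hπnn : ∀ i, 0 ≤ π i) (hπsum : ∑ i, π i = 1)
    (hπstat : ∀ j, ∑ i, π i * P i j = π j) :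
    π 2 + π 3 - π 0 - π 1 =
      (2 * α - 1) * (α * (2 * p - 1) + (p - 1) ^ 2) /
        ((1 - α) * (2 * α + 1) + (2 * α - 1) * p ^ 2) :=
  stmt13_general p α hα P hP π hπsum hπstat
end

section
/- For the two-dimensional simple symmetric random walk Z = (X, Y) on ℤ² started at (1, 0), let τ = inf{n ≥ 0 : X(n) = 0} be the first hitting time of the vertical axis. Then P(Y(τ) is even) = 2 − √2. -/
/-!
Every step changes exactly one coordinate by `±1` and `X τ = 0` is reached from `X 0 = 1`, so
`Y τ` is even exactly when `τ` is odd. Writing `P(τ = n)` as a sum over lattice paths, the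
generating function `G(x) = ∑ x^|w|` over the paths of a first passage from `1` to `0` satisfies
`G = x (1 + G)²`: decompose by the first step, and note that a passage from `2` splits uniquely
into two passages from `1`, the walk being skip-free to the left. At `x = 1/4` this forces
`G = 1`; at `x = -1/4` it leaves the roots `-3 ± 2√2`, of which only `2√2 - 3` is bounded by
`G(1/4)`. Hence `P(τ even) = (G(1/4) + G(-1/4)) / 2 = √2 - 1`. The disjoint cylinder events of
the paths provide the summability.
-/

lemma tsum_list_eq_sum_tsum_cons {α E : Type*} [NormedAddCommGroup E] [CompleteSpace E]
    {f : List α → E} (hf : Summable f) (s : Finset α) (hnil : f [] = 0)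
    (hcons : ∀ a ∉ s, ∀ w, f (a :: w) = 0) :
    ∑' w, f w = ∑ a ∈ s, ∑' w, f (a :: w) := by
  have hinj : Function.Injective fun p : α × List α => p.1 :: p.2 := fun p q h => by
    simpa [Prod.ext_iff] using h
  have hsupp : Function.support f ⊆ Set.range fun p : α × List α => p.1 :: p.2 := by
    rintro (_ | ⟨a, w⟩) hw
    · exact absurd hnil hw
    · exact ⟨(a, w), rfl⟩
  calc ∑' w, f w = ∑' p : α × List α, f (p.1 :: p.2) := (hinj.tsum_eq hsupp).symm
    _ = ∑' (a) (w), f (a :: w) := (hf.comp_injective hinj).tsum_prod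
    _ = ∑ a ∈ s, ∑' w, f (a :: w) := tsum_eq_sum fun a ha => by simp [hcons a ha]

namespace PlaneWalk

open Finset

def unitSteps : Finset (ℤ × ℤ) := {(1, 0), (-1, 0), (0, 1), (0, -1)}

def IsLatticePath (w : List (ℤ × ℤ)) : Prop := ∀ a ∈ w, a ∈ unitSteps

/-- `IsFirstPassage c w`: a walk whose first coordinate starts at `c` and makes the steps `w`
reaches `0` for the first time after its last step. -/
def IsFirstPassage : ℤ → List (ℤ × ℤ) → Prop
  | c, [] => c = 0
  | c, a :: w => c ≠ 0 ∧ IsFirstPassage (c + a.1) w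

variable {c : ℤ} {a : ℤ × ℤ} {u v w : List (ℤ × ℤ)}

@[simp] lemma isFirstPassage_nil : IsFirstPassage c [] ↔ c = 0 := Iff.rfl

@[simp] lemma isFirstPassage_cons :
    IsFirstPassage c (a :: w) ↔ c ≠ 0 ∧ IsFirstPassage (c + a.1) w := Iff.rfl

lemma isFirstPassage_zero : IsFirstPassage 0 w ↔ w = [] := by
  cases w <;> simp

lemma isFirstPassage_iff_take :
    IsFirstPassage c w ↔ c + w.sum.1 = 0 ∧ ∀ i < w.length, c + (w.take i).sum.1 ≠ 0 := by
  induction w generalizing c with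
  | nil => simp
  | cons a w ih =>
    simp only [isFirstPassage_cons, ih, List.length_cons, Nat.forall_lt_succ_left,
      List.take_zero, List.take_succ_cons, List.sum_cons, List.sum_nil, Prod.fst_add, Prod.fst_zero,
      add_zero, add_assoc]
    tauto

lemma IsFirstPassage.eq_nil_of_append (hu : IsFirstPassage c u)
    (huv : IsFirstPassage c (u ++ v)) : v = [] := by
  induction u generalizing c with
  | nil => exact isFirstPassage_zero.mp (hu ▸ huv)
  | cons a u ih => exact ih hu.2 huv.2

lemma IsFirstPassage.left_cancel (hu : IsFirstPassage c u) (hu' : IsFirstPassage c u')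
    (h : u ++ v = u' ++ v') : u = u' := by
  rcases List.append_eq_append_iff.mp h with ⟨b, rfl, -⟩ | ⟨b, rfl, -⟩
  · rw [hu.eq_nil_of_append hu', List.append_nil]
  · rw [hu'.eq_nil_of_append hu, List.append_nil]

lemma IsFirstPassage.append (hc : 0 < c) (hu : ∀ a ∈ u, -1 ≤ a.1) (huc : IsFirstPassage c u)
    (hv : IsFirstPassage 1 v) : IsFirstPassage (c + 1) (u ++ v) := by
  induction u generalizing c with
  | nil => exact absurd huc hc.ne'
  | cons a u ih =>
    have ha := hu a List.mem_cons_self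
    refine ⟨by omega, ?_⟩
    obtain h0 | hpos : c + a.1 = 0 ∨ 0 < c + a.1 := by omega
    · obtain rfl : u = [] := isFirstPassage_zero.mp (h0 ▸ huc.2)
      rw [show c + 1 + a.1 = 1 by omega]
      exact hv
    · rw [show c + 1 + a.1 = c + a.1 + 1 by ring]
      exact ih hpos (fun b hb => hu b (List.mem_cons_of_mem _ hb)) huc.2

lemma IsFirstPassage.exists_append (hc : 0 < c) (hw : ∀ a ∈ w, -1 ≤ a.1)
    (h : IsFirstPassage (c + 1) w) :
    ∃ u v, w = u ++ v ∧ IsFirstPassage c u ∧ IsFirstPassage 1 v := by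
  induction w generalizing c with
  | nil => exact absurd (show c + 1 = 0 from h) (by omega)
  | cons a w ih =>
    have ha := hw a List.mem_cons_self
    obtain h0 | hpos : c + a.1 = 0 ∨ 0 < c + a.1 := by omega
    · refine ⟨[a], w, rfl, ⟨hc.ne', h0⟩, ?_⟩
      rw [← show c + 1 + a.1 = 1 by omega]
      exact h.2
    · obtain ⟨u, v, rfl, hu, hv⟩ := ih hpos (fun b hb => hw b (List.mem_cons_of_mem _ hb))
        (by rw [← show c + 1 + a.1 = c + a.1 + 1 by ring]; exact h.2)
      exact ⟨a :: u, v, rfl, ⟨hc.ne', hu⟩, hv⟩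

lemma isLatticePath_cons : IsLatticePath (a :: w) ↔ a ∈ unitSteps ∧ IsLatticePath w :=
  List.forall_mem_cons

lemma IsLatticePath.neg_one_le_fst (hw : IsLatticePath w) : ∀ a ∈ w, -1 ≤ a.1 := by
  intro a ha
  have := hw a ha
  simp only [unitSteps, mem_insert, mem_singleton] at this
  rcases this with rfl | rfl | rfl | rfl <;> norm_num

lemma IsLatticePath.even_sum_add_iff (hw : IsLatticePath w) :
    Even (w.sum.1 + w.sum.2) ↔ Even w.length := by
  induction w with
  | nil => simp
  | cons a w ih =>
    have ha := hw a List.mem_cons_self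
    have hodd : ¬Even (a.1 + a.2) := by
      simp only [unitSteps, mem_insert, mem_singleton] at ha
      rcases ha with rfl | rfl | rfl | rfl <;> decide
    rw [List.sum_cons, Prod.fst_add, Prod.snd_add, List.length_cons, Nat.even_add_one,
      show a.1 + w.sum.1 + (a.2 + w.sum.2) = (a.1 + a.2) + (w.sum.1 + w.sum.2) by ring,
      Int.even_add, ih (fun b hb => hw b (List.mem_cons_of_mem _ hb))]
    simp [hodd]

lemma IsLatticePath.odd_sum_snd_iff (hw : IsLatticePath w) (h : IsFirstPassage 1 w) :
    Odd w.sum.2 ↔ Even w.length := by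
  have hx : w.sum.1 = -1 := by linarith [(isFirstPassage_iff_take.mp h).1]
  rw [← hw.even_sum_add_iff, hx, neg_add_eq_sub, Int.even_sub_one, Int.not_even_iff_odd]

def firstPassagePaths (c : ℤ) : Set (List (ℤ × ℤ)) := {w | IsLatticePath w ∧ IsFirstPassage c w}

noncomputable def firstPassageWeight (c : ℤ) (x : ℝ) : List (ℤ × ℤ) → ℝ :=
  (firstPassagePaths c).indicator fun w => x ^ w.length

noncomputable def firstPassageGF (c : ℤ) (x : ℝ) : ℝ := ∑' w, firstPassageWeight c x w

variable {x : ℝ}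

lemma norm_firstPassageWeight : ‖firstPassageWeight c x w‖ = firstPassageWeight c ‖x‖ w := by
  classical
  simp only [firstPassageWeight, Set.indicator_apply]
  split_ifs <;> simp

lemma firstPassageWeight_cons (hc : c ≠ 0) :
    firstPassageWeight c x (a :: w) =
      if a ∈ unitSteps then x * firstPassageWeight (c + a.1) x w else 0 := by
  classical
  have hmem : a :: w ∈ firstPassagePaths c ↔ a ∈ unitSteps ∧ w ∈ firstPassagePaths (c + a.1) := by
    simp only [firstPassagePaths, Set.mem_ofPred_eq, isLatticePath_cons, isFirstPassage_cons,
      ne_eq, hc, not_false_eq_true, true_and, and_assoc]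
  simp only [firstPassageWeight, Set.indicator_apply, hmem, List.length_cons, pow_succ']
  split_ifs <;> simp_all

lemma firstPassageGF_zero : firstPassageGF 0 x = 1 := by
  rw [firstPassageGF, tsum_eq_single []]
  · simp [firstPassageWeight, firstPassagePaths, IsLatticePath]
  · intro w hw
    simp [firstPassageWeight, firstPassagePaths, isFirstPassage_zero, hw]

lemma firstPassageGF_eq_sum (hc : c ≠ 0) (hs : Summable (firstPassageWeight c x)) :
    firstPassageGF c x = x * ∑ a ∈ unitSteps, firstPassageGF (c + a.1) x := by
  rw [firstPassageGF, tsum_list_eq_sum_tsum_cons hs unitSteps, Finset.mul_sum]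
  · refine Finset.sum_congr rfl fun a ha => ?_
    simp only [firstPassageWeight_cons hc, if_pos ha, tsum_mul_left, firstPassageGF]
  · simp [firstPassageWeight, firstPassagePaths, hc]
  · intro a ha w
    simp [firstPassageWeight_cons hc, ha]

lemma firstPassageGF_two (hs : Summable fun w => ‖firstPassageWeight 1 x w‖) :
    firstPassageGF 2 x = firstPassageGF 1 x ^ 2 := by
  rw [sq, firstPassageGF, firstPassageGF, tsum_mul_tsum_of_summable_norm hs hs]
  have hmem {u v} (h : firstPassageWeight 1 x u * firstPassageWeight 1 x v ≠ 0) :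
      u ∈ firstPassagePaths 1 ∧ v ∈ firstPassagePaths 1 :=
    ⟨Set.mem_of_indicator_ne_zero (left_ne_zero_of_mul h),
      Set.mem_of_indicator_ne_zero (right_ne_zero_of_mul h)⟩
  have hmul {u v} (hu : u ∈ firstPassagePaths 1) (hv : v ∈ firstPassagePaths 1) :
      firstPassageWeight 2 x (u ++ v) = firstPassageWeight 1 x u * firstPassageWeight 1 x v := by
    have huv : u ++ v ∈ firstPassagePaths 2 :=
      ⟨List.forall_mem_append.mpr ⟨hu.1, hv.1⟩, hu.2.append one_pos hu.1.neg_one_le_fst hv.2⟩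
    simp [firstPassageWeight, Set.indicator_of_mem, hu, hv, huv, pow_add]
  refine tsum_eq_tsum_of_ne_zero_bij (fun p => p.1.1 ++ p.1.2) ?_ ?_ ?_
  · rintro ⟨⟨u, v⟩, hp⟩ ⟨⟨u', v'⟩, hp'⟩ (h : u ++ v = u' ++ v')
    obtain rfl := (hmem hp).1.2.left_cancel (hmem hp').1.2 h
    obtain rfl := List.append_cancel_left h
    rfl
  · intro w hw
    have hw' : w ∈ firstPassagePaths 2 := Set.mem_of_indicator_ne_zero hw
    obtain ⟨u, v, rfl, hu, hv⟩ := hw'.2.exists_append one_pos hw'.1.neg_one_le_fst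
    have hpu : u ∈ firstPassagePaths 1 := ⟨fun a ha => hw'.1 a (List.mem_append_left _ ha), hu⟩
    have hpv : v ∈ firstPassagePaths 1 := ⟨fun a ha => hw'.1 a (List.mem_append_right _ ha), hv⟩
    exact ⟨⟨(u, v), by rwa [Function.mem_support, ← hmul hpu hpv]⟩, rfl⟩
  · rintro ⟨⟨u, v⟩, hp⟩
    exact hmul (hmem hp).1 (hmem hp).2

lemma firstPassageGF_one_eq (hs : Summable (firstPassageWeight 1 ‖x‖)) :
    firstPassageGF 1 x = x * (1 + firstPassageGF 1 x) ^ 2 := by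
  have hnorm : Summable fun w => ‖firstPassageWeight 1 x w‖ := by
    simpa only [norm_firstPassageWeight] using hs
  have hsteps : ∑ a ∈ unitSteps, firstPassageGF (1 + a.1) x =
      firstPassageGF 2 x + firstPassageGF 0 x + 2 * firstPassageGF 1 x := by
    simp [unitSteps]
    ring
  conv_lhs => rw [firstPassageGF_eq_sum one_ne_zero hnorm.of_norm, hsteps, firstPassageGF_zero,
    firstPassageGF_two hnorm]
  ring

lemma firstPassageGF_one_quarter (hs : Summable (firstPassageWeight 1 4⁻¹)) :
    firstPassageGF 1 4⁻¹ = 1 := by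
  have h : firstPassageGF 1 4⁻¹ = 4⁻¹ * (1 + firstPassageGF 1 4⁻¹) ^ 2 :=
    firstPassageGF_one_eq (by rwa [Real.norm_of_nonneg (by norm_num : (0 : ℝ) ≤ 4⁻¹)])
  have hsq : (firstPassageGF 1 4⁻¹ - 1) ^ 2 = 0 := by linear_combination (-4) * h
  linarith [pow_eq_zero_iff two_ne_zero |>.mp hsq]

lemma norm_firstPassageWeight_neg_inv_four :
    ‖firstPassageWeight c (-4⁻¹) w‖ = firstPassageWeight c 4⁻¹ w := by
  rw [norm_firstPassageWeight, norm_neg, Real.norm_of_nonneg (by norm_num)]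

lemma firstPassageGF_one_neg_quarter (hs : Summable (firstPassageWeight 1 4⁻¹)) :
    firstPassageGF 1 (-4⁻¹) = 2 * √2 - 3 := by
  have hs' : Summable fun w => ‖firstPassageWeight 1 (-4⁻¹) w‖ := by
    simpa only [norm_firstPassageWeight_neg_inv_four] using hs
  have h : firstPassageGF 1 (-4⁻¹) = -4⁻¹ * (1 + firstPassageGF 1 (-4⁻¹)) ^ 2 :=
    firstPassageGF_one_eq (by rwa [norm_neg, Real.norm_of_nonneg (by norm_num : (0 : ℝ) ≤ 4⁻¹)])
  have hbound : |firstPassageGF 1 (-4⁻¹)| ≤ 1 := calc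
    |firstPassageGF 1 (-4⁻¹)| ≤ ∑' w, ‖firstPassageWeight 1 (-4⁻¹) w‖ :=
      norm_tsum_le_tsum_norm hs'
    _ = 1 := by
      simp only [norm_firstPassageWeight_neg_inv_four]
      exact firstPassageGF_one_quarter hs
  -- the other root, `-3 - 2√2`, lies below `-1`
  have hroots : (firstPassageGF 1 (-4⁻¹) - (2 * √2 - 3)) * (firstPassageGF 1 (-4⁻¹) + 3 + 2 * √2)
      = 0 := by
    linear_combination 4 * h - 4 * Real.sq_sqrt (show (0 : ℝ) ≤ 2 by norm_num)
  rcases mul_eq_zero.mp hroots with h1 | h2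
  · linarith
  · linarith [(abs_le.mp hbound).1, Real.sqrt_nonneg 2]

def pathPrefix (s : ℕ → ℤ × ℤ) (n : ℕ) : List (ℤ × ℤ) := (List.range n).map s

section Sequence

variable {s : ℕ → ℤ × ℤ} {n i : ℕ}

@[simp] lemma length_pathPrefix : (pathPrefix s n).length = n := by simp [pathPrefix]

lemma take_pathPrefix (h : i ≤ n) : (pathPrefix s n).take i = pathPrefix s i := by
  simp [pathPrefix, ← List.map_take, List.take_range, min_eq_left h]

lemma sum_pathPrefix : (pathPrefix s n).sum = ∑ j ∈ range n, s j := rfl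

lemma fst_sum_take_pathPrefix (h : i ≤ n) :
    ((pathPrefix s n).take i).sum.1 = ∑ j ∈ range i, (s j).1 := by
  rw [take_pathPrefix h, sum_pathPrefix, Prod.fst_sum]

lemma isFirstPassage_pathPrefix_iff :
    IsFirstPassage c (pathPrefix s n) ↔ IsLeast {m | c + ∑ j ∈ range m, (s j).1 = 0} n := by
  rw [isFirstPassage_iff_take, IsLeast, mem_lowerBounds, length_pathPrefix, sum_pathPrefix,
    Prod.fst_sum]
  refine and_congr_right fun _ => ⟨fun h m hm => not_lt.mp fun hmn => ?_, fun h m hmn hm => ?_⟩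
  · exact h m hmn (by rwa [fst_sum_take_pathPrefix hmn.le])
  · rw [fst_sum_take_pathPrefix hmn.le] at hm
    exact (h m hm).not_gt hmn

def oddHitPaths : Set (List (ℤ × ℤ)) := {w | IsFirstPassage 1 w ∧ Odd w.sum.2}

lemma odd_sum_snd_sInf_iff :
    Odd (∑ k ∈ range (sInf {n | 1 + ∑ j ∈ range n, (s j).1 = 0}), (s k).2) ↔
      ∃ w ∈ oddHitPaths, pathPrefix s w.length = w := by
  constructor
  · intro h
    -- if the axis is never hit, `sInf ∅ = 0` and the sum is empty
    have hne : {n | 1 + ∑ j ∈ range n, (s j).1 = 0}.Nonempty := by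
      by_contra hempty
      rw [Set.not_nonempty_iff_eq_empty.mp hempty, Nat.sInf_empty] at h
      simp at h
    refine ⟨pathPrefix s _, ⟨isFirstPassage_pathPrefix_iff.mpr (isLeast_csInf hne), ?_⟩,
      by rw [length_pathPrefix]⟩
    rwa [sum_pathPrefix, Prod.snd_sum]
  · rintro ⟨w, ⟨hw, hodd⟩, hpre⟩
    rw [← hpre] at hw hodd
    rwa [(isFirstPassage_pathPrefix_iff.mp hw).csInf_eq, ← Prod.snd_sum, ← sum_pathPrefix]

end Sequence

section Measure

open MeasureTheory ProbabilityTheory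

variable {Ω : Type*} {m0 : MeasurableSpace Ω} {μ : Measure Ω} {ξ : ℕ → Ω → ℤ × ℤ}

def cylinder (ξ : ℕ → Ω → ℤ × ℤ) (w : List (ℤ × ℤ)) : Set Ω :=
  {ω | pathPrefix (ξ · ω) w.length = w}

lemma cylinder_eq_biInter (w : List (ℤ × ℤ)) :
    cylinder ξ w = ⋂ j ∈ range w.length, ξ j ⁻¹' {w.getD j 0} := by
  ext ω
  simp only [cylinder, pathPrefix, List.ext_getElem_iff, Set.mem_ofPred_eq, Set.mem_iInter,
    mem_range, Set.mem_preimage, Set.mem_singleton_iff, List.length_map, List.length_range,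
    List.getElem_map, List.getElem_range, true_and]
  exact forall₂_congr fun j hj => by
    rw [List.getD_eq_getElem _ _ hj, forall_prop_of_true hj]

lemma measurableSet_cylinder (hmeas : ∀ k, Measurable (ξ k)) (w : List (ℤ × ℤ)) :
    MeasurableSet (cylinder ξ w) := by
  rw [cylinder_eq_biInter]
  exact Finset.measurableSet_biInter _ fun j _ => hmeas j (measurableSet_singleton _)

lemma measure_preimage_singleton_eq_zero [IsProbabilityMeasure μ]
    (hmeas : ∀ k, Measurable (ξ k)) (hunif : ∀ k, ∀ v ∈ unitSteps, μ (ξ k ⁻¹' {v}) = 4⁻¹)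
    (k : ℕ) {v : ℤ × ℤ} (hv : v ∉ unitSteps) : μ (ξ k ⁻¹' {v}) = 0 := by
  have hsteps : μ (ξ k ⁻¹' unitSteps) = 1 := by
    rw [← sum_measure_preimage_singleton _ fun v _ => hmeas k (measurableSet_singleton v),
      Finset.sum_congr rfl (hunif k), sum_const]
    simp [unitSteps, ENNReal.mul_inv_cancel]
  have hnull : μ (ξ k ⁻¹' unitSteps)ᶜ = 0 :=
    (prob_compl_eq_zero_iff (hmeas k (Finset.measurableSet _))).mpr hsteps
  exact measure_mono_null (fun ω (hω : ξ k ω = v) => by simpa [hω] using hv) hnull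

lemma measure_cylinder_of_isLatticePath (hindep : iIndepFun ξ μ)
    (hunif : ∀ k, ∀ v ∈ unitSteps, μ (ξ k ⁻¹' {v}) = 4⁻¹) (hw : IsLatticePath w) :
    μ (cylinder ξ w) = 4⁻¹ ^ w.length := by
  rw [cylinder_eq_biInter, hindep.measure_inter_preimage_eq_mul _
    fun _ _ => measurableSet_singleton _]
  rw [Finset.prod_congr rfl fun j hj => hunif j _ (hw _ ?_), prod_const, card_range]
  rw [List.getD_eq_getElem _ _ (mem_range.mp hj)]
  exact List.getElem_mem _

lemma measure_cylinder_of_not_isLatticePath [IsProbabilityMeasure μ]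
    (hmeas : ∀ k, Measurable (ξ k)) (hindep : iIndepFun ξ μ)
    (hunif : ∀ k, ∀ v ∈ unitSteps, μ (ξ k ⁻¹' {v}) = 4⁻¹) (hw : ¬IsLatticePath w) :
    μ (cylinder ξ w) = 0 := by
  obtain ⟨v, hvw, hv⟩ : ∃ v ∈ w, v ∉ unitSteps := by simpa [IsLatticePath] using hw
  obtain ⟨j, hj, rfl⟩ := List.getElem_of_mem hvw
  rw [cylinder_eq_biInter, hindep.measure_inter_preimage_eq_mul _
    fun _ _ => measurableSet_singleton _]
  refine Finset.prod_eq_zero (mem_range.mpr hj) ?_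
  rw [List.getD_eq_getElem _ _ hj]
  exact measure_preimage_singleton_eq_zero hmeas hunif j hv

lemma pairwiseDisjoint_cylinder (c : ℤ) :
    {w | IsFirstPassage c w}.PairwiseDisjoint (cylinder ξ) := by
  intro w hw w' hw' hne
  refine Set.disjoint_left.mpr fun ω h h' => hne ?_
  wlog hle : w.length ≤ w'.length generalizing w w'
  · exact (this hw' hw (Ne.symm hne) h' h (le_of_not_ge hle)).symm
  have htake : w'.take w.length = w := by
    rw [← show pathPrefix (ξ · ω) w'.length = w' from h', take_pathPrefix hle]
    exact h
  refine hw.left_cancel hw' (v' := []) (v := w'.drop w.length) ?_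
  rw [List.append_nil]
  nth_rewrite 1 [← htake]
  exact List.take_append_drop _ _

lemma measure_biUnion_cylinder (hmeas : ∀ k, Measurable (ξ k)) {A : Set (List (ℤ × ℤ))}
    (hA : A ⊆ {w | IsFirstPassage c w}) :
    μ (⋃ w ∈ A, cylinder ξ w) = ∑' w, A.indicator (fun w => μ (cylinder ξ w)) w := by
  rw [measure_biUnion A.to_countable ((pairwiseDisjoint_cylinder c).subset hA)
    fun w _ => measurableSet_cylinder hmeas w]
  exact _root_.tsum_subtype A fun w => μ (cylinder ξ w)

lemma setOf_even_eq_compl_biUnion_cylinder (ξ : ℕ → Ω → ℤ × ℤ) :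
    {ω | Even (∑ k ∈ range (sInf {n | 1 + ∑ j ∈ range n, (ξ j ω).1 = 0}), (ξ k ω).2)} =
      (⋃ w ∈ oddHitPaths, cylinder ξ w)ᶜ := by
  ext ω
  simp only [Set.mem_ofPred_eq, Set.mem_compl_iff, Set.mem_iUnion, ← Int.not_odd_iff_even,
    odd_sum_snd_sInf_iff, exists_prop]
  rfl

lemma ofReal_inv_four_pow (n : ℕ) : ENNReal.ofReal ((4 : ℝ)⁻¹ ^ n) = 4⁻¹ ^ n := by
  rw [ENNReal.ofReal_pow (by norm_num), ENNReal.ofReal_inv_of_pos (by norm_num),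
    ENNReal.ofReal_ofNat]

variable [IsProbabilityMeasure μ] (hmeas : ∀ k, Measurable (ξ k)) (hindep : iIndepFun ξ μ)
  (hunif : ∀ k, ∀ v ∈ unitSteps, μ (ξ k ⁻¹' {v}) = 4⁻¹)
include hmeas hindep hunif

lemma summable_firstPassageWeight_inv_four (c : ℤ) : Summable (firstPassageWeight c 4⁻¹) := by
  have hweight : ∀ w, ENNReal.ofReal (firstPassageWeight c 4⁻¹ w) =
      (firstPassagePaths c).indicator (fun w => μ (cylinder ξ w)) w := by
    intro w
    by_cases hw : w ∈ firstPassagePaths c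
    · rw [firstPassageWeight, Set.indicator_of_mem hw, Set.indicator_of_mem hw,
        ofReal_inv_four_pow, measure_cylinder_of_isLatticePath hindep hunif hw.1]
    · rw [firstPassageWeight, Set.indicator_of_notMem hw, Set.indicator_of_notMem hw,
        ENNReal.ofReal_zero]
  have hfin : ∑' w, ENNReal.ofReal (firstPassageWeight c 4⁻¹ w) ≠ ⊤ := by
    rw [tsum_congr hweight, ← measure_biUnion_cylinder hmeas fun w hw => hw.2]
    exact measure_ne_top μ _
  refine (ENNReal.summable_toReal hfin).congr fun w => ENNReal.toReal_ofReal ?_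
  simpa only [norm_firstPassageWeight, Real.norm_of_nonneg (by norm_num : (0 : ℝ) ≤ 4⁻¹)]
    using norm_nonneg (firstPassageWeight c 4⁻¹ w)

lemma oddHitPaths_indicator_measure_cylinder (w : List (ℤ × ℤ)) :
    oddHitPaths.indicator (fun w => μ (cylinder ξ w)) w =
      ENNReal.ofReal ((firstPassageWeight 1 4⁻¹ w + firstPassageWeight 1 (-4⁻¹) w) / 2) := by
  by_cases hw : w ∈ firstPassagePaths 1
  · have hodd : w ∈ oddHitPaths ↔ Even w.length :=
      (and_iff_right hw.2).trans (hw.1.odd_sum_snd_iff hw.2)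
    simp only [firstPassageWeight, Set.indicator_of_mem hw]
    rcases Nat.even_or_odd w.length with heven | hodd'
    · rw [Set.indicator_of_mem (hodd.mpr heven), heven.neg_pow, add_self_div_two,
        ofReal_inv_four_pow, measure_cylinder_of_isLatticePath hindep hunif hw.1]
    · rw [Set.indicator_of_notMem fun h => Nat.not_even_iff_odd.mpr hodd' (hodd.mp h),
        hodd'.neg_pow, add_neg_cancel, zero_div, ENNReal.ofReal_zero]
  · simp only [firstPassageWeight, Set.indicator_of_notMem hw, add_zero, zero_div,
      ENNReal.ofReal_zero]
    exact Set.indicator_apply_eq_zero.mpr fun hodd =>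
      measure_cylinder_of_not_isLatticePath hmeas hindep hunif fun hlat => hw ⟨hlat, hodd.1⟩

lemma measure_oddHit :
    μ (⋃ w ∈ oddHitPaths, cylinder ξ w) = ENNReal.ofReal (√2 - 1) := by
  have hs := summable_firstPassageWeight_inv_four hmeas hindep hunif 1
  have hs' : Summable (firstPassageWeight 1 (-4⁻¹)) :=
    .of_norm (by simpa only [norm_firstPassageWeight_neg_inv_four] using hs)
  have hnonneg (w : List (ℤ × ℤ)) :
      0 ≤ (firstPassageWeight 1 4⁻¹ w + firstPassageWeight 1 (-4⁻¹) w) / 2 := by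
    have := neg_abs_le (firstPassageWeight 1 (-4⁻¹) w)
    rw [← Real.norm_eq_abs, norm_firstPassageWeight_neg_inv_four] at this
    linarith
  rw [measure_biUnion_cylinder hmeas fun w hw => hw.1,
    tsum_congr (oddHitPaths_indicator_measure_cylinder hmeas hindep hunif),
    ← ENNReal.ofReal_tsum_of_nonneg hnonneg ((hs.add hs').div_const 2), tsum_div_const,
    hs.tsum_add hs']
  change ENNReal.ofReal ((firstPassageGF 1 4⁻¹ + firstPassageGF 1 (-4⁻¹)) / 2) = _
  rw [firstPassageGF_one_quarter hs, firstPassageGF_one_neg_quarter hs]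
  ring_nf

end Measure

end PlaneWalk

open MeasureTheory ProbabilityTheory
open PlaneWalk

theorem stmt14_general {Ω : Type*} {m0 : MeasurableSpace Ω} {μ : Measure Ω} [IsProbabilityMeasure μ]
    (ξ : ℕ → Ω → ℤ × ℤ)
    (hmeas : ∀ k, Measurable (ξ k))
    (hindep : iIndepFun ξ μ)
    (hunif : ∀ k v, v ∈ ({(1, 0), (-1, 0), (0, 1), (0, -1)} : Set (ℤ × ℤ)) →
      μ {ω | ξ k ω = v} = 1 / 4) :
    μ {ω | Even ((∑ k ∈ Finset.range
          (sInf {n : ℕ | 1 + ∑ j ∈ Finset.range n, (ξ j ω).1 = 0}), (ξ k ω).2))}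
      = ENNReal.ofReal (2 - Real.sqrt 2) := by
  have hunif' : ∀ k, ∀ v ∈ unitSteps, μ (ξ k ⁻¹' {v}) = 4⁻¹ := fun k v hv => by
    rw [← one_div]
    exact hunif k v (by simpa [unitSteps] using hv)
  have hmeasOdd : MeasurableSet (⋃ w ∈ oddHitPaths, cylinder ξ w) :=
    .biUnion oddHitPaths.to_countable fun w _ => measurableSet_cylinder hmeas w
  have h2 : 1 ≤ √2 := Real.one_le_sqrt.mpr one_le_two
  rw [setOf_even_eq_compl_biUnion_cylinder, prob_compl_eq_one_sub hmeasOdd,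
    measure_oddHit hmeas hindep hunif', ← ENNReal.ofReal_one,
    ← ENNReal.ofReal_sub _ (by linarith)]
  ring_nf

/-- for the simple symmetric random walk Z = (X,Y) on ℤ² started at (1,0)
(written as the partial-sum process of i.i.d. uniform nearest-neighbour steps ξ), with
τ = inf{n : X(n) = 0} the first hitting time of the vertical axis, the probability that
Y(τ) is even equals 2 − √2. -/
theorem stmt14 {Ω : Type*} {m0 : MeasurableSpace Ω} {μ : Measure Ω} [IsProbabilityMeasure μ]
    (ξ : ℕ → Ω → ℤ × ℤ)
    (hmeas : ∀ k, Measurable (ξ k))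
    (hindep : iIndepFun ξ μ)
    (hident : ∀ k, Measure.map (ξ k) μ = Measure.map (ξ 0) μ)
    (hunif : ∀ k v, v ∈ ({(1, 0), (-1, 0), (0, 1), (0, -1)} : Set (ℤ × ℤ)) →
      μ {ω | ξ k ω = v} = 1 / 4) :
    μ {ω | Even ((∑ k ∈ Finset.range
          (sInf {n : ℕ | 1 + ∑ j ∈ Finset.range n, (ξ j ω).1 = 0}), (ξ k ω).2))}
      = ENNReal.ofReal (2 - Real.sqrt 2) :=
  stmt14_general (m0 := m0) ξ hmeas hindep hunif
end

section
/- Let (X_n^{j,±})_{n} and (X^{j,±}) be processes indexed by a finite set such that X_n^{j,±} → X^{j,±} uniformly on [0,T] a.s., all are nonnegative, at each time at most one of the limit processes and at most one of the prelimit processes is positive, and the limit process spends Lebesgue-zero time at the common zero. Then for each j and each t ≤ T, ∫_0^t 1{X_n^{j,±}(s) > 0} ds → ∫_0^t 1{X^{j,±}(s) > 0} ds almost surely. -/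
/-!
Fix a coordinate `i` and `ε > 0`. Once every coordinate is uniformly `ε`-close to its limit, the
time set `{X_n^i > 0}` contains `{X^i > ε}` and, by disjointness of the prelimit supports, is
contained in `{X^j ≤ ε for all j ≠ i}`. As `ε ↓ 0` the lower bound increases to `{X^i > 0}`, and
the upper bound decreases to `{X^j = 0 for all j ≠ i}`, which lies in `{X^i > 0}` up to the null
set where all limit coordinates vanish.

The prelimit processes are not assumed measurable in time, so `volume` of their positivity sets
is an outer measure; squeezing them between measurable sets replaces dominated convergence.
-/

open MeasureTheory Set Filter Topology
open scoped ENNReal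

section Squeeze

variable {α β : Type*} {m : MeasurableSpace α} {μ : Measure α} {l : Filter β}

theorem tendsto_measure_of_squeeze {s : β → Set α} {A : Set α} {L U : ℕ → Set α}
    (hL : Monotone L) (hAL : A ⊆ ⋃ k, L k)
    (hU : Antitone U) (hUm : ∀ k, NullMeasurableSet (U k) μ) (hUfin : ∃ k, μ (U k) ≠ ∞)
    (hUA : μ (⋂ k, U k) ≤ μ A)
    (hsq : ∀ k, ∀ᶠ n in l, L k ⊆ s n ∧ s n ⊆ U k) :
    Tendsto (fun n => μ (s n)) l (𝓝 (μ A)) := by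
  refine tendsto_order.2 ⟨fun a ha => ?_, fun b hb => ?_⟩
  · have hLlim := tendsto_measure_iUnion_atTop (μ := μ) hL
    obtain ⟨k, hk⟩ :=
      (hLlim.eventually (eventually_gt_nhds (ha.trans_le (measure_mono hAL)))).exists
    filter_upwards [hsq k] with n hn
    exact hk.trans_le (measure_mono hn.1)
  · have hUlim := tendsto_measure_iInter_atTop hUm hU hUfin
    obtain ⟨k, hk⟩ := (hUlim.eventually (eventually_lt_nhds (hUA.trans_lt hb))).exists
    filter_upwards [hsq k] with n hn
    exact (measure_mono hn.2).trans_lt hk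

end Squeeze

section PositivitySets

variable {α β ι : Type*} {S : Set α} {f : ι → α → ℝ}

theorem iInter_setOf_forall_ne_le_subset (hf0 : ∀ j, ∀ x ∈ S, 0 ≤ f j x) (i : ι) :
    ⋂ k : ℕ, {x ∈ S | ∀ j, j ≠ i → f j x ≤ 1 / (k + 1)} ⊆
      {x ∈ S | 0 < f i x} ∪ {x ∈ S | ∀ j, f j x = 0} := by
  intro x hx
  have hxS : x ∈ S := (mem_iInter.1 hx 0).1
  by_cases hi : 0 < f i x
  · exact Or.inl ⟨hxS, hi⟩
  refine Or.inr ⟨hxS, fun j => le_antisymm ?_ (hf0 j x hxS)⟩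
  by_cases hji : j = i
  · exact hji ▸ not_lt.1 hi
  refine le_of_forall_pos_le_add fun δ hδ => ?_
  obtain ⟨k, hk⟩ := exists_nat_one_div_lt hδ
  simpa using ((mem_iInter.1 hx k).2 j hji).trans hk.le

variable [MeasurableSpace α] [Finite ι] {μ : Measure α} {l : Filter β} {g : β → ι → α → ℝ}

theorem measurableSet_setOf_forall_ne_le (hS : MeasurableSet S) (hf : ∀ j, Measurable (f j))
    (i : ι) (c : ℝ) : MeasurableSet {x ∈ S | ∀ j, j ≠ i → f j x ≤ c} := by
  have : {x ∈ S | ∀ j, j ≠ i → f j x ≤ c} = S ∩ ⋂ (j) (_ : j ≠ i), {x | f j x ≤ c} := by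
    ext x; simp
  rw [this]
  exact hS.inter <| .iInter fun j => .iInter fun _ => measurableSet_le (hf j) measurable_const

theorem tendsto_measure_setOf_pos_of_tendstoUniformlyOn (hS : MeasurableSet S) (hSfin : μ S ≠ ∞)
    (hf : ∀ j, Measurable (f j)) (hf0 : ∀ j, ∀ x ∈ S, 0 ≤ f j x)
    (hzero : μ {x ∈ S | ∀ j, f j x = 0} = 0)
    (hg : ∀ j, TendstoUniformlyOn (fun n => g n j) (f j) l S)
    (hgdisj : ∀ n i j, i ≠ j → ∀ x, g n i x * g n j x = 0) (i : ι) :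
    Tendsto (fun n => μ {x ∈ S | 0 < g n i x}) l (𝓝 (μ {x ∈ S | 0 < f i x})) := by
  set ε : ℕ → ℝ := fun k => 1 / (k + 1)
  have hε : ∀ k, 0 < ε k := fun k => Nat.one_div_pos_of_nat
  refine tendsto_measure_of_squeeze (L := fun k => {x ∈ S | ε k < f i x})
    (U := fun k => {x ∈ S | ∀ j, j ≠ i → f j x ≤ ε k}) ?mono ?cover ?anti
    (fun k => (measurableSet_setOf_forall_ne_le hS hf i _).nullMeasurableSet)
    ⟨0, ((measure_mono fun x hx => hx.1).trans_lt hSfin.lt_top).ne⟩ ?inter ?squeeze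
  case mono =>
    exact fun k k' hk x hx => ⟨hx.1, (Nat.one_div_le_one_div hk).trans_lt hx.2⟩
  case cover =>
    rintro x ⟨hxS, hx⟩
    obtain ⟨k, hk⟩ := exists_nat_one_div_lt hx
    exact mem_iUnion.2 ⟨k, hxS, hk⟩
  case anti =>
    exact fun k k' hk x hx => ⟨hx.1, fun j hj => (hx.2 j hj).trans (Nat.one_div_le_one_div hk)⟩
  case inter =>
    have hsub := iInter_setOf_forall_ne_le_subset hf0 i
    calc μ (⋂ k, {x ∈ S | ∀ j, j ≠ i → f j x ≤ ε k})
        ≤ μ ({x ∈ S | 0 < f i x} ∪ {x ∈ S | ∀ j, f j x = 0}) := measure_mono hsub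
      _ ≤ μ {x ∈ S | 0 < f i x} + μ {x ∈ S | ∀ j, f j x = 0} := measure_union_le _ _
      _ = μ {x ∈ S | 0 < f i x} := by rw [hzero, add_zero]
  case squeeze =>
    intro k
    have hclose : ∀ᶠ n in l, ∀ j, ∀ x ∈ S, dist (f j x) (g n j x) < ε k := eventually_all.2
      fun j => Metric.tendstoUniformlyOn_iff.1 (hg j) (ε k) (hε k)
    filter_upwards [hclose] with n hn
    refine ⟨fun x ⟨hxS, hx⟩ => ⟨hxS, ?_⟩, fun x ⟨hxS, hx⟩ => ⟨hxS, fun j hji => ?_⟩⟩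
    · linarith [(abs_sub_lt_iff.1 (hn i x hxS)).1]
    · have hgj : g n j x = 0 := (mul_eq_zero.1 (hgdisj n i j (Ne.symm hji) x)).resolve_left hx.ne'
      linarith [(abs_sub_lt_iff.1 (hn j x hxS)).1]

end PositivitySets

theorem stmt18_general {Ω : Type*} {m0 : MeasurableSpace Ω} {μ : Measure Ω}
    {ι : Type*} [Fintype ι]
    (T : ℝ)
    (Xn : ℕ → ι → ℝ → Ω → ℝ) (X : ι → ℝ → Ω → ℝ)
    (hXcont : ∀ i ω, Continuous fun t => X i t ω)
    -- a.s. uniform convergence on [0,T]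
    (hconv : ∀ᵐ ω ∂μ, ∀ i, TendstoUniformlyOn (fun n t => Xn n i t ω)
      (fun t => X i t ω) atTop (Icc 0 T))
    -- nonnegativity
    (hXnn : ∀ i t ω, 0 ≤ X i t ω)
    -- at each time at most one prelimit coordinate and at most one limit coordinate
    -- is positive
    (hdisjn : ∀ n i j, i ≠ j → ∀ t ω, Xn n i t ω * Xn n j t ω = 0)
    -- the limit spends Lebesgue-zero time at the common zero
    (hzero : ∀ᵐ ω ∂μ, volume {s : ℝ | s ∈ Icc 0 T ∧ ∀ i, X i s ω = 0} = 0) :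
    ∀ᵐ ω ∂μ, ∀ i, ∀ t ∈ Icc (0:ℝ) T,
      Tendsto (fun n : ℕ => (volume {s : ℝ | s ∈ Ioc 0 t ∧ 0 < Xn n i s ω}).toReal)
        atTop (nhds ((volume {s : ℝ | s ∈ Ioc 0 t ∧ 0 < X i s ω}).toReal)) := by
  filter_upwards [hconv, hzero] with ω hω hz i t ht
  have hsub : Ioc 0 t ⊆ Icc 0 T := Ioc_subset_Icc_self.trans (Icc_subset_Icc_right ht.2)
  have hz' : volume {s ∈ Ioc 0 t | ∀ j, X j s ω = 0} = 0 :=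
    measure_mono_null (fun _ hs => ⟨hsub hs.1, hs.2⟩ : _ ⊆ {s | s ∈ Icc 0 T ∧ _}) hz
  have hlim := tendsto_measure_setOf_pos_of_tendstoUniformlyOn (μ := volume) measurableSet_Ioc
    measure_Ioc_lt_top.ne (fun j => (hXcont j ω).measurable) (fun j s _ => hXnn j s ω)
    hz' (fun j => (hω j).mono hsub)
    (fun n i j hij s => hdisjn n i j hij s ω) i
  exact (ENNReal.tendsto_toReal
    ((measure_mono fun s hs => hs.1).trans_lt measure_Ioc_lt_top).ne).comp hlim

/-- convergence of occupation integrals. If finitely many nonnegative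
processes with pairwise disjoint positivity sets converge a.s. uniformly on [0,T] to
limit processes with the same disjointness property, and the limit spends Lebesgue-zero
time at the common zero, then the occupation times of the positivity sets converge. -/
theorem stmt18 {Ω : Type*} {m0 : MeasurableSpace Ω} {μ : Measure Ω} [IsProbabilityMeasure μ]
    {ι : Type*} [Fintype ι]
    (T : ℝ) (hT : 0 < T)
    (Xn : ℕ → ι → ℝ → Ω → ℝ) (X : ι → ℝ → Ω → ℝ)
    (hXcont : ∀ i ω, Continuous fun t => X i t ω)
    -- a.s. uniform convergence on [0,T]
    (hconv : ∀ᵐ ω ∂μ, ∀ i, TendstoUniformlyOn (fun n t => Xn n i t ω)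
      (fun t => X i t ω) atTop (Icc 0 T))
    -- nonnegativity
    (hnn : ∀ n i t ω, 0 ≤ Xn n i t ω) (hXnn : ∀ i t ω, 0 ≤ X i t ω)
    -- at each time at most one prelimit coordinate and at most one limit coordinate
    -- is positive
    (hdisjn : ∀ n i j, i ≠ j → ∀ t ω, Xn n i t ω * Xn n j t ω = 0)
    (hdisj : ∀ i j, i ≠ j → ∀ t ω, X i t ω * X j t ω = 0)
    -- the limit spends Lebesgue-zero time at the common zero
    (hzero : ∀ᵐ ω ∂μ, volume {s : ℝ | s ∈ Icc 0 T ∧ ∀ i, X i s ω = 0} = 0) :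
    ∀ᵐ ω ∂μ, ∀ i, ∀ t ∈ Icc (0:ℝ) T,
      Tendsto (fun n : ℕ => (volume {s : ℝ | s ∈ Ioc 0 t ∧ 0 < Xn n i s ω}).toReal)
        atTop (nhds ((volume {s : ℝ | s ∈ Ioc 0 t ∧ 0 < X i s ω}).toReal)) :=
  stmt18_general (m0 := m0) T Xn X hXcont hconv hXnn hdisjn hzero
end
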